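/- Let Q be of type (r−1,1), c₀ with Q(c₀) < 0 fixed, and c with Q(c) < 0 in the same cone (B(c,c₀) < 0). Then Q_c(ν) ≥ λ_{c,c₀}·Q_{c₀}(ν) for all ν ∈ ℝ^r, where Q_c(ν) = Q(ν) − B(c,ν)²/(2Q(c)), Q_{c₀}(ν) = Q(ν) − B(c₀,ν)²/(2Q(c₀)), and λ_{c,c₀} = [B(c,c₀)² − 2Q(c)Q(c₀) − |B(c,c₀)|·√(B(c,c₀)² − 4Q(c)Q(c₀))] / (2Q(c)Q(c₀)) > 0. -/
import Mathlib


open Matrix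

/-- The quadratic form `Q(x) = ½⟨x, Ax⟩` associated to an integer matrix `A`. -/
noncomputable def Qf {r : ℕ} (A : Matrix (Fin r) (Fin r) ℤ) (x : Fin r → ℝ) : ℝ :=
  (1/2) * (x ⬝ᵥ (A.map (Int.cast : ℤ → ℝ)).mulVec x)

/-- The bilinear form `B(x,y) = ⟨x, Ay⟩`. -/
noncomputable def Bf {r : ℕ} (A : Matrix (Fin r) (Fin r) ℤ) (x y : Fin r → ℝ) : ℝ :=
  x ⬝ᵥ (A.map (Int.cast : ℤ → ℝ)).mulVec y

section Aux

variable {r : ℕ} (A : Matrix (Fin r) (Fin r) ℤ)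

lemma Qf_eq_Bf (x : Fin r → ℝ) : Qf A x = 1/2 * Bf A x x := rfl

lemma Bf_comm (hsym : A.IsSymm) (x y : Fin r → ℝ) : Bf A x y = Bf A y x := by
  have hs : (A.map (Int.cast : ℤ → ℝ))ᵀ = A.map (Int.cast : ℤ → ℝ) := by
    rw [← Matrix.transpose_map, hsym.eq]
  unfold Bf
  rw [Matrix.dotProduct_mulVec, ← Matrix.mulVec_transpose, hs, dotProduct_comm]

lemma Bf_combo (a e : ℝ) (z x y : Fin r → ℝ) :
    Bf A z (a • x + e • y) = a * Bf A z x + e * Bf A z y := by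
  simp [Bf, Matrix.mulVec_add, Matrix.mulVec_smul, dotProduct_add, dotProduct_smul,
    smul_eq_mul]

lemma Bf_combo_left (a e : ℝ) (x y z : Fin r → ℝ) :
    Bf A (a • x + e • y) z = a * Bf A x z + e * Bf A y z := by
  simp [Bf, add_dotProduct, smul_dotProduct, smul_eq_mul]

lemma Qf_combo (hsym : A.IsSymm) (a e : ℝ) (x y : Fin r → ℝ) :
    Qf A (a • x + e • y) = a^2 * Qf A x + a * e * Bf A x y + e^2 * Qf A y := by
  rw [Qf_eq_Bf, Bf_combo, Bf_combo_left, Bf_combo_left, Qf_eq_Bf, Qf_eq_Bf,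
    Bf_comm A hsym y x]
  ring

lemma Qf_zero : Qf A (0 : Fin r → ℝ) = 0 := by
  simp [Qf]

/-- `Q` is positive semidefinite on the orthogonal complement of a negative vector. -/
lemma Qf_psd_perp (hsym : A.IsSymm)
    (hmax : ∀ W : Submodule ℝ (Fin r → ℝ),
      (∀ x ∈ W, x ≠ 0 → Qf A x < 0) → Module.finrank ℝ W ≤ 1)
    (v : Fin r → ℝ) (hv : Qf A v < 0)
    (u : Fin r → ℝ) (hu : Bf A v u = 0) : 0 ≤ Qf A u := by
  by_contra hneg
  push_neg at hneg
  have hu0 : u ≠ 0 := by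
    rintro rfl
    rw [Qf_zero] at hneg
    linarith
  have hvv : Bf A v v = 2 * Qf A v := by rw [Qf_eq_Bf]; ring
  have hli : LinearIndependent ℝ ![v, u] := by
    rw [LinearIndependent.pair_iff]
    intro s t hst
    have h1 : Bf A v (s • v + t • u) = 0 := by rw [hst]; simp [Bf]
    rw [Bf_combo, hu, hvv] at h1
    have h2 : s * (2 * Qf A v) = 0 := by linarith
    have hs : s = 0 := by
      rcases mul_eq_zero.mp h2 with h | h
      · exact h
      · exfalso; linarith
    subst hs
    refine ⟨rfl, ?_⟩
    rw [zero_smul, zero_add] at hst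
    rcases smul_eq_zero.mp hst with h | h
    · exact h
    · exact absurd h hu0
  have hW : ∀ x ∈ Submodule.span ℝ {v, u}, x ≠ 0 → Qf A x < 0 := by
    intro x hx hx0
    obtain ⟨s, t, rfl⟩ := Submodule.mem_span_pair.mp hx
    rw [Qf_combo A hsym, hu]
    rcases eq_or_ne s 0 with rfl | hs
    · have ht : t ≠ 0 := by
        rintro rfl
        simp at hx0
      have h2 : 0 < t^2 := by positivity
      nlinarith [h2, hneg]
    · have h2 : 0 < s^2 := by positivity
      nlinarith [h2, hv, sq_nonneg t, hneg]
  have hle := hmax _ hW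
  have hfr : Module.finrank ℝ (Submodule.span ℝ {v, u}) = 2 := by
    have h1 := finrank_span_eq_card hli
    have h2 : Set.range ![v, u] = {v, u} := by
      simp [Matrix.range_cons, Matrix.range_empty, Set.pair_comm]
    rw [h2] at h1
    simpa using h1
  rw [hfr] at hle
  omega

/-- Cauchy-Schwarz-type inequality for `Qf` at a negative vector. -/
lemma Qf_CS (hsym : A.IsSymm)
    (hmax : ∀ W : Submodule ℝ (Fin r → ℝ),
      (∀ x ∈ W, x ≠ 0 → Qf A x < 0) → Module.finrank ℝ W ≤ 1)
    (v : Fin r → ℝ) (hv : Qf A v < 0) (u : Fin r → ℝ) :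
    4 * Qf A v * Qf A u ≤ (Bf A v u)^2 := by
  have hvv : Bf A v v = 2 * Qf A v := by rw [Qf_eq_Bf]; ring
  have hperp : Bf A v ((2 * Qf A v) • u + (-(Bf A v u)) • v) = 0 := by
    rw [Bf_combo, hvv]; ring
  have h := Qf_psd_perp A hsym hmax v hv _ hperp
  rw [Qf_combo A hsym, Bf_comm A hsym u v] at h
  nlinarith [h, hv]

end Aux

section Scalar

/-- positivity of λ, purely scalar. -/
lemma scalar_pos (q q₀ b L : ℝ) (hq : q < 0) (hq0 : q₀ < 0) (hb : b < 0)
    (hL0 : 0 ≤ L) (hL2 : L^2 = b^2 - 4*q*q₀) (hD : 4*q*q₀ ≤ b^2) :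
    0 < (b^2 - 2*q*q₀ - -b*L)/(2*q*q₀) := by
  have hp : 0 < q*q₀ := mul_pos_of_neg_of_neg hq hq0
  have hfac : (b^2 - 2*q*q₀ + b*L)*(b^2 - 2*q*q₀ - b*L) = 4*(q*q₀)^2 := by
    linear_combination (-(b^2))*hL2
  have hbL : 0 ≤ -b*L := mul_nonneg (by linarith) hL0
  have hpos2 : 0 < b^2 - 2*q*q₀ - b*L := by nlinarith [hbL, hp, hD]
  have hnum : 0 < b^2 - 2*q*q₀ - -b*L := by nlinarith [hfac, hpos2, hp]
  exact div_pos hnum (by linarith)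

/-- the main inequality, purely scalar. -/
lemma scalar_main (q q₀ b X Y Qν L : ℝ) (hq : q < 0) (hq0 : q₀ < 0) (hb : b < 0)
    (hL0 : 0 ≤ L) (hL2 : L^2 = b^2 - 4*q*q₀)
    (hCS : ∀ α β : ℝ, 4*q₀*(α^2*Qν + α*β*X + β^2*q) ≤ (α*Y + β*b)^2) :
    (b^2 - 2*q*q₀ - -b*L)/(2*q*q₀) * (Qν - Y^2/(2*q₀)) ≤ Qν - X^2/(2*q) := by
  have hp : 0 < q*q₀ := mul_pos_of_neg_of_neg hq hq0
  have hqne : q ≠ 0 := ne_of_lt hq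
  have hq0ne : q₀ ≠ 0 := ne_of_lt hq0
  have hD : 4*q*q₀ ≤ b^2 := by nlinarith [hCS 0 1]
  rcases eq_or_lt_of_le hD with hK0 | hK
  · -- degenerate case : b² = 4 q q₀, c proportional to c₀, λ = 1
    have hLz : L = 0 := by
      have h1 : L^2 = 0 := by rw [hL2]; linarith
      exact (pow_eq_zero_iff two_ne_zero).mp h1
    subst hLz
    have hlin : ∀ α : ℝ, 0 ≤ (Y^2 - 4*q₀*Qν) + α*(2*b*Y - 4*q₀*X) := by
      intro α
      have h := hCS 1 α
      have hKα : (b^2 - 4*q*q₀)*α^2 = 0 := by rw [← hK0]; ring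
      nlinarith [h, hKα]
    have hs : 2*b*Y - 4*q₀*X = 0 := by
      by_contra hne
      have h1 := hlin ((-(Y^2 - 4*q₀*Qν) - 1)/(2*b*Y - 4*q₀*X))
      rw [div_mul_cancel₀ _ hne] at h1
      linarith
    have hXY : q₀ * X^2 = q * Y^2 := by
      have h2 : (2*b*Y - 4*q₀*X) * (2*b*Y + 4*q₀*X) = 0 := by rw [hs]; ring
      have h3 : 4*q₀*(q₀*X^2 - q*Y^2) = 0 := by
        linear_combination (-1/4)*h2 - Y^2*hK0
      have h4 : q₀*X^2 - q*Y^2 = 0 := by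
        rcases mul_eq_zero.mp h3 with h | h
        · exfalso; linarith
        · exact h
      linarith
    have hlam : (b^2 - 2*q*q₀ - -b*(0:ℝ))/(2*q*q₀) = 1 := by
      rw [← hK0]
      field_simp
      ring
    rw [hlam, one_mul]
    have hE : X^2/(2*q) = Y^2/(2*q₀) := by
      rw [div_eq_div_iff (by linarith) (by linarith)]
      linear_combination 2*hXY
    linarith [hE]
  · -- nondegenerate case
    have hKpos : 0 < b^2 - 4*q*q₀ := by linarith
    have hLpos : 0 < L := by nlinarith [hL2, hL0]
    have hbL : b + L < 0 := by nlinarith [hL2, hLpos, hp, hb]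
    have hT : 0 ≤ (b^2 - 4*q*q₀)*Qν + q₀*X^2 - b*X*Y + q*Y^2 := by
      have h := hCS (b^2 - 4*q*q₀) (2*q₀*X - b*Y)
      have h5 : 0 ≤ (-4*q₀*(b^2 - 4*q*q₀)) *
          ((b^2 - 4*q*q₀)*Qν + q₀*X^2 - b*X*Y + q*Y^2) := by nlinarith [h]
      exact (mul_nonneg_iff_of_pos_left
        (mul_pos (by linarith : (0:ℝ) < -4*q₀) hKpos)).mp h5
    have hT' : 0 ≤ L^2*Qν + q₀*X^2 - b*X*Y + q*Y^2 := by
      rw [hL2]; linarith [hT]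
    have hA1 : 0 ≤ -(4*q*q₀)*(b+L)*(L^2*Qν + q₀*X^2 - b*X*Y + q*Y^2) :=
      mul_nonneg (by nlinarith [hp, hbL]) hT'
    have hA2 : 0 ≤ b*q*(2*q₀*X - (b+L)*Y)^2 :=
      mul_nonneg (by nlinarith [hb, hq]) (sq_nonneg _)
    have hid : L * (8*q^2*q₀^2*Qν - 4*q*q₀^2*X^2 -
          (b^2 - 2*q*q₀ + b*L)*(4*q*q₀*Qν - 2*q*Y^2))
        = -(4*q*q₀)*(b+L)*(L^2*Qν + q₀*X^2 - b*X*Y + q*Y^2)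
          + b*q*(2*q₀*X - (b+L)*Y)^2 := by
      linear_combination (q*b*Y^2 + 4*q*q₀*L*Qν) * hL2
    have hW : 0 ≤ 8*q^2*q₀^2*Qν - 4*q*q₀^2*X^2 -
        (b^2 - 2*q*q₀ + b*L)*(4*q*q₀*Qν - 2*q*Y^2) := by
      have hLW : 0 ≤ L * (8*q^2*q₀^2*Qν - 4*q*q₀^2*X^2 -
          (b^2 - 2*q*q₀ + b*L)*(4*q*q₀*Qν - 2*q*Y^2)) := by
        rw [hid]; linarith [hA1, hA2]
      exact (mul_nonneg_iff_of_pos_left hLpos).mp hLW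
    have hfin : (Qν - X^2/(2*q)) - (b^2 - 2*q*q₀ - -b*L)/(2*q*q₀) * (Qν - Y^2/(2*q₀))
        = (8*q^2*q₀^2*Qν - 4*q*q₀^2*X^2 -
            (b^2 - 2*q*q₀ + b*L)*(4*q*q₀*Qν - 2*q*Y^2)) / (8*q^2*q₀^2) := by
      field_simp
      ring
    have hdiv : 0 ≤ (8*q^2*q₀^2*Qν - 4*q*q₀^2*X^2 -
        (b^2 - 2*q*q₀ + b*L)*(4*q*q₀*Qν - 2*q*Y^2)) / (8*q^2*q₀^2) :=
      div_nonneg hW (by positivity)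
    linarith [hfin, hdiv]

end Scalar

/-- For `c, c₀` in the same negative cone, `Q_c(ν) ≥ λ_{c,c₀} Q_{c₀}(ν)` with
`λ_{c,c₀} = [B(c,c₀)² - 2Q(c)Q(c₀) - |B(c,c₀)|√(B(c,c₀)² - 4Q(c)Q(c₀))]/(2Q(c)Q(c₀)) > 0`. -/
theorem Qc_ge_lambda_Qc0 {r : ℕ} (A : Matrix (Fin r) (Fin r) ℤ)
    (hsym : A.IsSymm) (hdet : A.det ≠ 0)
    (hneg : ∃ c : Fin r → ℝ, Qf A c < 0)
    (hmax : ∀ W : Submodule ℝ (Fin r → ℝ),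
      (∀ x ∈ W, x ≠ 0 → Qf A x < 0) → Module.finrank ℝ W ≤ 1)
    (c₀ c : Fin r → ℝ) (hc₀ : Qf A c₀ < 0) (hc : Qf A c < 0) (hcc₀ : Bf A c c₀ < 0) :
    0 < (Bf A c c₀ ^ 2 - 2 * Qf A c * Qf A c₀ -
          |Bf A c c₀| * Real.sqrt (Bf A c c₀ ^ 2 - 4 * Qf A c * Qf A c₀)) /
        (2 * Qf A c * Qf A c₀) ∧
    ∀ ν : Fin r → ℝ,
      (Bf A c c₀ ^ 2 - 2 * Qf A c * Qf A c₀ -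
          |Bf A c c₀| * Real.sqrt (Bf A c c₀ ^ 2 - 4 * Qf A c * Qf A c₀)) /
        (2 * Qf A c * Qf A c₀) * (Qf A ν - (Bf A c₀ ν) ^ 2 / (2 * Qf A c₀))
      ≤ Qf A ν - (Bf A c ν) ^ 2 / (2 * Qf A c) := by
  have hb0c : Bf A c₀ c = Bf A c c₀ := Bf_comm A hsym c₀ c
  have hD : 4 * Qf A c * Qf A c₀ ≤ Bf A c c₀ ^ 2 := by
    have h := Qf_CS A hsym hmax c₀ hc₀ c
    rw [hb0c] at h
    nlinarith [h]
  have hDnn : 0 ≤ Bf A c c₀ ^ 2 - 4 * Qf A c * Qf A c₀ := by linarith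
  have hL2 : (Real.sqrt (Bf A c c₀ ^ 2 - 4 * Qf A c * Qf A c₀))^2
      = (Bf A c c₀)^2 - 4 * Qf A c * Qf A c₀ := Real.sq_sqrt hDnn
  rw [abs_of_neg hcc₀]
  constructor
  · exact scalar_pos (Qf A c) (Qf A c₀) (Bf A c c₀) _ hc hc₀ hcc₀
      (Real.sqrt_nonneg _) hL2 hD
  · intro ν
    refine scalar_main (Qf A c) (Qf A c₀) (Bf A c c₀) (Bf A c ν) (Bf A c₀ ν) (Qf A ν)
      _ hc hc₀ hcc₀ (Real.sqrt_nonneg _) hL2 ?_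
    intro α β
    have h := Qf_CS A hsym hmax c₀ hc₀ (α • ν + β • c)
    rw [Qf_combo A hsym, Bf_combo, hb0c, Bf_comm A hsym ν c] at h
    nlinarith [h]
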